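/- arXiv:2002.05141 — 3 statements merged into one kernel-verified Lean document; each statement's English description precedes it below -/
import Mathlib

section
/- Let λ > 0, let p, i, T be natural numbers with p + i + 1 ≤ T, and let Z_p, Z_{p+1}, …, Z_{2T-1} be vectors in ℝ^q. For each k define the q×q matrix V̄_k = λI + Σ_{j=p}^{k} Z_j Z_jᵀ. Then Σ_{k=T}^{2T-1} Z_{k-i}ᵀ (V̄_k)⁻¹ Z_{k-i} ≤ log det(V̄_{2T-i-1} · (V̄_{T-i-1})⁻¹). -/
/-! Each summand is bounded by a log-determinant increment. Since `V̄_{k-i} ≤ V̄_k` in the Loewner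
order, replacing `V̄_k` by `V̄_{k-i} = V̄_{k-i-1} + Z_{k-i} Z_{k-i}ᵀ` can only increase the inverse
quadratic form; and for `B = A + z zᵀ` the matrix determinant lemma gives
`det A / det B = 1 - zᵀ B⁻¹ z`, so `zᵀ B⁻¹ z ≤ log det B - log det A` by `1 - 1/x ≤ log x`.
The increments telescope to `log det V̄_{2T-i-1} - log det V̄_{T-i-1}`. -/

open Matrix Finset

/-- The regularized Gram matrix `V̄_k = λ I + ∑_{j=p}^{k} Z_j Z_jᵀ`. -/
noncomputable def Vbar {q : ℕ} (lam : ℝ) (p : ℕ) (Z : ℕ → Fin q → ℝ) (k : ℕ) :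
    Matrix (Fin q) (Fin q) ℝ :=
  lam • (1 : Matrix (Fin q) (Fin q) ℝ) + ∑ j ∈ Finset.Icc p k, vecMulVec (Z j) (Z j)

open scoped MatrixOrder

namespace Matrix

variable {n : Type*} [Fintype n]

theorem posSemidef_vecMulVec_self (v : n → ℝ) : (vecMulVec v v).PosSemidef := by
  simpa using posSemidef_vecMulVec_self_star v

variable [DecidableEq n] {A B : Matrix n n ℝ}

theorem det_add_vecMulVec {R : Type*} [CommRing R] {M : Matrix n n R} (hM : IsUnit M.det)
    (u v : n → R) : (M + vecMulVec u v).det = M.det * (1 + v ⬝ᵥ (M⁻¹ *ᵥ u)) := by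
  rw [vecMulVec_eq Unit, det_add_replicateCol_mul_replicateRow hM, det_unique (n := Unit),
    add_apply, one_apply_eq, Matrix.mul_assoc, ← replicateCol_mulVec,
    replicateRow_mul_replicateCol_apply]

/-- Equality holds at `u = A⁻¹ x`: this is the variational formula
`xᵀ A⁻¹ x = max_u (2 xᵀ u - uᵀ A u)`. -/
theorem PosDef.two_mul_dotProduct_sub_le (hA : A.PosDef) (x u : n → ℝ) :
    2 * (x ⬝ᵥ u) - u ⬝ᵥ (A *ᵥ u) ≤ x ⬝ᵥ (A⁻¹ *ᵥ x) := by
  have hsq := hA.inv.posSemidef.dotProduct_mulVec_nonneg (x - A *ᵥ u)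
  have hdet : IsUnit A.det := (isUnit_iff_isUnit_det A).mp hA.isUnit
  have hcancel : A⁻¹ *ᵥ (A *ᵥ u) = u := by rw [mulVec_mulVec, nonsing_inv_mul _ hdet, one_mulVec]
  have hsymm : (A *ᵥ u) ⬝ᵥ (A⁻¹ *ᵥ x) = x ⬝ᵥ u := by
    have hAt : Aᵀ = A := by simpa using hA.isHermitian.eq
    rw [dotProduct_comm, dotProduct_mulVec, ← mulVec_transpose, hAt, mulVec_mulVec,
      mul_nonsing_inv _ hdet, one_mulVec]
  simp only [star_trivial, mulVec_sub, hcancel, sub_dotProduct, dotProduct_sub, hsymm] at hsq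
  rw [dotProduct_comm (A *ᵥ u) u] at hsq
  linarith

theorem PosDef.dotProduct_inv_mulVec_le_of_le (hA : A.PosDef) (hAB : A ≤ B) (x : n → ℝ) :
    x ⬝ᵥ (B⁻¹ *ᵥ x) ≤ x ⬝ᵥ (A⁻¹ *ᵥ x) := by
  have hB : B.PosDef := by simpa using hA.add_posSemidef hAB
  set u := B⁻¹ *ᵥ x
  have hBu : B *ᵥ u = x := by
    rw [mulVec_mulVec, mul_nonsing_inv _ ((isUnit_iff_isUnit_det B).mp hB.isUnit), one_mulVec]
  have hgap := hAB.dotProduct_mulVec_nonneg u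
  simp only [star_trivial, sub_mulVec, dotProduct_sub, hBu] at hgap
  rw [dotProduct_comm u x] at hgap
  linarith [hA.two_mul_dotProduct_sub_le x u]

theorem PosDef.dotProduct_inv_mulVec_le_log_det_sub (hA : A.PosDef) (z : n → ℝ) :
    z ⬝ᵥ ((A + vecMulVec z z)⁻¹ *ᵥ z) ≤
      Real.log (A + vecMulVec z z).det - Real.log A.det := by
  set B := A + vecMulVec z z
  have hB : B.PosDef := hA.add_posSemidef (posSemidef_vecMulVec_self z)
  have hdetA : A.det = B.det * (1 - z ⬝ᵥ (B⁻¹ *ᵥ z)) := by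
    have h := det_add_vecMulVec ((isUnit_iff_isUnit_det B).mp hB.isUnit) (-z) z
    rwa [show B + vecMulVec (-z) z = A by simp [B, neg_vecMulVec], mulVec_neg, dotProduct_neg,
      ← sub_eq_add_neg] at h
  have hlog := Real.one_sub_inv_le_log_of_pos (div_pos hB.det_pos hA.det_pos)
  have hratio : A.det / B.det = 1 - z ⬝ᵥ (B⁻¹ *ᵥ z) := by
    rw [hdetA, mul_div_cancel_left₀ _ hB.det_pos.ne']
  rw [Real.log_div hB.det_pos.ne' hA.det_pos.ne', inv_div, hratio] at hlog
  linarith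

theorem log_det_mul_inv (hA : A.det ≠ 0) (hB : B.det ≠ 0) :
    Real.log (A * B⁻¹).det = Real.log A.det - Real.log B.det := by
  rw [det_mul, det_nonsing_inv, Ring.inverse_eq_inv', ← div_eq_mul_inv, Real.log_div hA hB]

end Matrix

theorem Finset.sum_Icc_sub_tsub {M : Type*} [AddCommGroup M] (f : ℕ → M) {a b i : ℕ}
    (hia : i < a) (hab : a ≤ b) :
    ∑ k ∈ Icc a b, (f (k - i) - f (k - i - 1)) = f (b - i) - f (a - i - 1) := by
  have hshift : Icc a b = (Icc (a - i - 1) (b - i - 1)).map (addRightEmbedding (i + 1)) := by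
    rw [map_add_right_Icc]; congr 1 <;> omega
  rw [hshift, sum_map]
  have hterm (x : ℕ) : x + (i + 1) - i = x + 1 := by omega
  simp only [addRightEmbedding_apply, hterm, Nat.add_sub_cancel]
  rw [Finset.sum_Icc_sub (by omega)]
  congr 2; omega

section Vbar

variable {q : ℕ} {lam : ℝ} {p : ℕ} {Z : ℕ → Fin q → ℝ}

theorem Vbar_posDef (hlam : 0 < lam) (k : ℕ) : (Vbar lam p Z k).PosDef :=
  (PosDef.one.smul hlam).add_posSemidef <|
    posSemidef_sum _ fun j _ => posSemidef_vecMulVec_self (Z j)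

theorem Vbar_succ {k : ℕ} (hk : p ≤ k + 1) :
    Vbar lam p Z (k + 1) = Vbar lam p Z k + vecMulVec (Z (k + 1)) (Z (k + 1)) := by
  rw [Vbar, Vbar, sum_Icc_succ_top hk, add_assoc]

theorem Vbar_monotone : Monotone (Vbar lam p Z) := fun k l hkl => by
  rw [le_iff, Vbar, Vbar, add_sub_add_left_eq_sub,
    ← sum_sdiff_eq_sub (Icc_subset_Icc le_rfl hkl)]
  exact posSemidef_sum _ fun j _ => posSemidef_vecMulVec_self (Z j)

theorem dotProduct_inv_Vbar_mulVec_le (hlam : 0 < lam) {m l : ℕ} (hpm : p < m) (hml : m ≤ l) :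
    Z m ⬝ᵥ ((Vbar lam p Z l)⁻¹ *ᵥ Z m) ≤
      Real.log (Vbar lam p Z m).det - Real.log (Vbar lam p Z (m - 1)).det := by
  obtain ⟨m, rfl⟩ : ∃ m', m = m' + 1 := ⟨m - 1, by omega⟩
  calc Z (m + 1) ⬝ᵥ ((Vbar lam p Z l)⁻¹ *ᵥ Z (m + 1))
      ≤ Z (m + 1) ⬝ᵥ ((Vbar lam p Z (m + 1))⁻¹ *ᵥ Z (m + 1)) :=
        (Vbar_posDef hlam _).dotProduct_inv_mulVec_le_of_le (Vbar_monotone hml) _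
    _ ≤ _ := by
        rw [Nat.add_sub_cancel, Vbar_succ (by omega)]
        exact (Vbar_posDef hlam m).dotProduct_inv_mulVec_le_log_det_sub _

end Vbar

/-- self-normalized sum bound
`∑_{k=T}^{2T-1} Z_{k-i}ᵀ V̄_k⁻¹ Z_{k-i} ≤ log det (V̄_{2T-i-1} V̄_{T-i-1}⁻¹)`. -/
theorem sum_quadform_le_logdet {q : ℕ} (lam : ℝ) (hlam : 0 < lam)
    (p i T : ℕ) (hT : p + i + 1 ≤ T) (Z : ℕ → Fin q → ℝ) :
    ∑ k ∈ Finset.Icc T (2 * T - 1), Z (k - i) ⬝ᵥ ((Vbar lam p Z k)⁻¹ *ᵥ Z (k - i)) ≤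
      Real.log ((Vbar lam p Z (2 * T - i - 1) * (Vbar lam p Z (T - i - 1))⁻¹).det) := by
  set L : ℕ → ℝ := fun m => Real.log (Vbar lam p Z m).det
  calc ∑ k ∈ Icc T (2 * T - 1), Z (k - i) ⬝ᵥ ((Vbar lam p Z k)⁻¹ *ᵥ Z (k - i))
      ≤ ∑ k ∈ Icc T (2 * T - 1), (L (k - i) - L (k - i - 1)) :=
        sum_le_sum fun k hk => by
          rw [mem_Icc] at hk
          exact dotProduct_inv_Vbar_mulVec_le hlam (by omega) (by omega)
    _ = L (2 * T - i - 1) - L (T - i - 1) := by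
        rw [sum_Icc_sub_tsub L (by omega) (by omega), Nat.sub_right_comm]
    _ = _ :=
        (log_det_mul_inv (Vbar_posDef hlam _).det_pos.ne' (Vbar_posDef hlam _).det_pos.ne').symm
end

section
/- Let Z be a random vector in ℝ^N distributed according to the centered multivariate Gaussian measure with covariance matrix Σ, where Σ is symmetric positive semidefinite. Then for every t ≥ 0, P(ZᵀZ ≤ tr(Σ) − t) ≤ exp(−t² / (8‖Σ‖_F²)). -/
open Matrix MeasureTheory ProbabilityTheory

/-- The positive semidefinite square root (as in the older Mathlib's `Matrix.PosSemidef.sqrt`). -/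
noncomputable def Matrix.PosSemidef.sqrt {n : Type*} [Fintype n] [DecidableEq n]
    {A : Matrix n n ℝ} (hA : A.PosSemidef) : Matrix n n ℝ :=
  hA.1.eigenvectorUnitary.1 * diagonal ((↑) ∘ (√·) ∘ hA.1.eigenvalues) *
    (star hA.1.eigenvectorUnitary : Matrix n n ℝ)

/-- The law of a vector of `N` i.i.d. standard Gaussians. -/
noncomputable def stdGaussianPi (N : ℕ) : Measure (Fin N → ℝ) :=
  Measure.pi (fun _ => gaussianReal 0 1)

/-- The centered multivariate Gaussian measure `N(0, S)` with positive semidefinite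
covariance `S`, realized as the pushforward of an i.i.d. standard Gaussian vector
under multiplication by `S^{1/2}`. -/
noncomputable def multivarGaussian {N : ℕ} {S : Matrix (Fin N) (Fin N) ℝ}
    (hS : S.PosSemidef) : Measure (Fin N → ℝ) :=
  (stdGaussianPi N).map (fun x => hS.sqrt *ᵥ x)

/-!
Write `Σ = U diag(λ) Uᵀ`. Then `Σ^{1/2} X`, with `X` standard Gaussian, has squared norm
`∑ λᵢ Yᵢ²` where `Y = Uᵀ X` is again standard Gaussian by rotation invariance. The Chernoff
bound, with the `χ²` moment generating function `E exp(-s Y²) = (1 + 2s)^{-1/2}` and the estimate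
`(1 + v)^{-1/2} ≤ exp(v²/4 - v/2)`, gives `P(∑ λᵢ Yᵢ² ≤ ∑ λᵢ - t) ≤ exp(l² ∑ λᵢ² - l t)` for every
`l ≥ 0`; take `l = t / (2 ∑ λᵢ²)`, and note `tr Σ = ∑ λᵢ` and `‖Σ‖_F² = ∑ λᵢ²`.
-/

open Real

theorem inv_sqrt_one_add_le_exp {v : ℝ} (hv : 0 ≤ v) :
    (√(1 + v))⁻¹ ≤ exp (v ^ 2 / 4 - v / 2) := by
  have hlog : v - v ^ 2 / 2 ≤ log (1 + v) := by
    refine le_trans ?_ (le_log_one_add_of_nonneg hv)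
    rw [le_div_iff₀ (by linarith)]
    nlinarith [sq_nonneg v, mul_nonneg hv (sq_nonneg v)]
  have hexp : exp (v / 2 - v ^ 2 / 4) ≤ √(1 + v) := by
    rw [le_sqrt (exp_pos _).le (by linarith), sq, ← exp_add, ← le_log_iff_exp_le (by linarith)]
    linarith
  calc (√(1 + v))⁻¹ ≤ (exp (v / 2 - v ^ 2 / 4))⁻¹ := inv_anti₀ (exp_pos _) hexp
    _ = exp (v ^ 2 / 4 - v / 2) := by rw [← exp_neg, neg_sub]

namespace Matrix

variable {n : Type*} [Fintype n] [DecidableEq n]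

theorem dotProduct_mulVec_self_of_mem_unitaryGroup {U : Matrix n n ℝ}
    (hU : U ∈ unitaryGroup n ℝ) (v : n → ℝ) : (U *ᵥ v) ⬝ᵥ (U *ᵥ v) = v ⬝ᵥ v := by
  rw [dotProduct_mulVec, ← mulVec_transpose, mulVec_mulVec,
    ← conjTranspose_eq_transpose_of_trivial, ← star_eq_conjTranspose,
    mem_unitaryGroup_iff'.mp hU, one_mulVec]

theorem IsHermitian.sum_sum_sq_eq_sum_eigenvalues_sq {A : Matrix n n ℝ} (hA : A.IsHermitian) :
    ∑ i, ∑ j, A i j ^ 2 = ∑ i, hA.eigenvalues i ^ 2 := by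
  have htrace : ∑ i, ∑ j, A i j ^ 2 = (A * A).trace := by
    simp only [trace, diag, mul_apply, sq]
    refine Finset.sum_congr rfl fun i _ => Finset.sum_congr rfl fun j _ => ?_
    rw [← hA.apply j i]
    rfl
  rw [htrace]
  conv_lhs => rw [hA.spectral_theorem, ← map_mul, Unitary.conjStarAlgAut_apply,
    trace_mul_cycle, Unitary.coe_star_mul_self, one_mul, diagonal_mul_diagonal, trace_diagonal]
  simp [sq]

theorem PosSemidef.dotProduct_sqrt_mulVec_self {A : Matrix n n ℝ} (hA : A.PosSemidef)
    (x : n → ℝ) :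
    (hA.sqrt *ᵥ x) ⬝ᵥ (hA.sqrt *ᵥ x) =
      ∑ i, hA.1.eigenvalues i * ((star hA.1.eigenvectorUnitary : Matrix n n ℝ) *ᵥ x) i ^ 2 := by
  rw [PosSemidef.sqrt, ← mulVec_mulVec, ← mulVec_mulVec,
    dotProduct_mulVec_self_of_mem_unitaryGroup hA.1.eigenvectorUnitary.2]
  simp only [dotProduct, mulVec_diagonal, Function.comp_apply]
  refine Finset.sum_congr rfl fun i _ => ?_
  rw [← sq, mul_pow, sq_sqrt (hA.eigenvalues_nonneg i)]

end Matrix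

section StandardGaussian

variable {ι : Type*} [Fintype ι]

theorem map_mulVec_pi_gaussianReal [DecidableEq ι] {U : Matrix ι ι ℝ}
    (hU : U ∈ unitaryGroup ι ℝ) :
    (Measure.pi fun _ : ι => gaussianReal 0 1).map (U *ᵥ ·) =
      Measure.pi fun _ : ι => gaussianReal 0 1 := by
  let e : EuclideanSpace ℝ ι ≃ₗᵢ[ℝ] EuclideanSpace ℝ ι :=
    Unitary.linearIsometryEquiv ⟨toEuclideanCLM (𝕜 := ℝ) U, Unitary.map_mem _ hU⟩
  have hofLp : (stdGaussian (EuclideanSpace ℝ ι)).map WithLp.ofLp =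
      Measure.pi fun _ : ι => gaussianReal 0 1 := by
    rw [← map_pi_eq_stdGaussian, Measure.map_map (by fun_prop) (by fun_prop)]
    exact Measure.map_id
  calc (Measure.pi fun _ : ι => gaussianReal 0 1).map (U *ᵥ ·)
      = (((Measure.pi fun _ : ι => gaussianReal 0 1).map (WithLp.toLp 2)).map e).map
          WithLp.ofLp := by
        rw [Measure.map_map (by fun_prop) (by fun_prop),
          Measure.map_map (by fun_prop) (by fun_prop)]
        rfl
    _ = Measure.pi fun _ : ι => gaussianReal 0 1 := by
        rw [map_pi_eq_stdGaussian, stdGaussian_map, hofLp]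

/-- For `2 * u ≥ 1` both sides are junk `0`: the integrand is not integrable, and `√` of a
nonpositive number is `0`. -/
theorem mgf_sq_gaussianReal (u : ℝ) :
    mgf (fun s => s ^ 2) (gaussianReal 0 1) u = (√(1 - 2 * u))⁻¹ := by
  have hpdf : ∀ s, gaussianPDFReal 0 1 s * exp (u * s ^ 2) =
      (√(2 * π))⁻¹ * exp (-(1 / 2 - u) * s ^ 2) := fun s => by
    rw [gaussianPDFReal, mul_assoc, ← exp_add]
    congr 2 <;> simp; ring
  simp_rw [mgf, integral_gaussianReal_eq_integral_smul one_ne_zero, smul_eq_mul, hpdf,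
    integral_const_mul, integral_gaussian]
  rw [← sqrt_inv, ← sqrt_inv, ← sqrt_mul (by positivity)]
  congr 1
  field_simp

theorem mgf_sum_mul_sq_pi_gaussianReal (w : ι → ℝ) (u : ℝ) :
    mgf (fun y => ∑ i, w i * y i ^ 2) (Measure.pi fun _ : ι => gaussianReal 0 1) u =
      ∏ i, (√(1 - 2 * (u * w i)))⁻¹ := by
  have hprod : ∀ y : ι → ℝ, exp (u * ∑ i, w i * y i ^ 2) = ∏ i, exp (u * w i * y i ^ 2) := by
    intro y
    rw [← exp_sum, Finset.mul_sum]
    simp only [mul_assoc]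
  simp_rw [mgf, hprod, integral_fintype_prod_eq_prod (fun i s => exp (u * w i * s ^ 2))]
  exact Finset.prod_congr rfl fun i _ => mgf_sq_gaussianReal _

theorem measureReal_sum_mul_sq_le_le_exp_mul_prod {w : ι → ℝ} (hw : ∀ i, 0 ≤ w i) {l : ℝ}
    (hl : 0 ≤ l) (c : ℝ) :
    (Measure.pi fun _ : ι => gaussianReal 0 1).real {y | ∑ i, w i * y i ^ 2 ≤ c} ≤
      exp (l * c) * ∏ i, (√(1 + 2 * (l * w i)))⁻¹ := by
  have hint : Integrable (fun y : ι → ℝ => exp (-l * ∑ i, w i * y i ^ 2))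
      (Measure.pi fun _ : ι => gaussianReal 0 1) := by
    refine Integrable.of_bound (by fun_prop : Measurable _).aestronglyMeasurable 1
      (Filter.Eventually.of_forall fun y => ?_)
    rw [norm_of_nonneg (exp_pos _).le, exp_le_one_iff, neg_mul, neg_nonpos]
    exact mul_nonneg hl (Finset.sum_nonneg fun i _ => mul_nonneg (hw i) (sq_nonneg _))
  refine (measure_le_le_exp_mul_mgf c (neg_nonpos.mpr hl) hint).trans_eq ?_
  simp only [mgf_sum_mul_sq_pi_gaussianReal, neg_neg, neg_mul, mul_neg, sub_neg_eq_add]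

theorem measureReal_sum_mul_sq_le_sum_sub_le_exp {w : ι → ℝ} (hw : ∀ i, 0 ≤ w i) {t : ℝ}
    (ht : 0 ≤ t) :
    (Measure.pi fun _ : ι => gaussianReal 0 1).real {y | ∑ i, w i * y i ^ 2 ≤ ∑ i, w i - t} ≤
      exp (-(t ^ 2 / (4 * ∑ i, w i ^ 2))) := by
  have hQ : 0 ≤ ∑ i, w i ^ 2 := Finset.sum_nonneg fun i _ => sq_nonneg (w i)
  -- `l` minimises `l ↦ l² ∑ wᵢ² - l t`
  set l := t / (2 * ∑ i, w i ^ 2)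
  have hl : 0 ≤ l := by positivity
  have hsum : ∑ i, ((2 * (l * w i)) ^ 2 / 4 - 2 * (l * w i) / 2) =
      l ^ 2 * ∑ i, w i ^ 2 - l * ∑ i, w i := by
    rw [Finset.mul_sum, Finset.mul_sum, ← Finset.sum_sub_distrib]
    exact Finset.sum_congr rfl fun i _ => by ring
  have hmin : l ^ 2 * ∑ i, w i ^ 2 - l * t = -(t ^ 2 / (4 * ∑ i, w i ^ 2)) := by
    rcases hQ.eq_or_lt with hQ | hQ
    · simp [l, ← hQ]
    · simp only [l]
      field_simp
      ring
  calc _ ≤ exp (l * (∑ i, w i - t)) * ∏ i, (√(1 + 2 * (l * w i)))⁻¹ :=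
        measureReal_sum_mul_sq_le_le_exp_mul_prod hw hl _
    _ ≤ exp (l * (∑ i, w i - t)) * ∏ i, exp ((2 * (l * w i)) ^ 2 / 4 - 2 * (l * w i) / 2) := by
        gcongr with i
        exact inv_sqrt_one_add_le_exp (mul_nonneg zero_le_two (mul_nonneg hl (hw i)))
    _ = exp (-(t ^ 2 / (4 * ∑ i, w i ^ 2))) := by
        rw [← exp_sum, ← exp_add, hsum, ← hmin]
        ring_nf

end StandardGaussian

theorem multivarGaussian_setOf_dotProduct_self_le {N : ℕ} {S : Matrix (Fin N) (Fin N) ℝ}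
    (hS : S.PosSemidef) (c : ℝ) :
    multivarGaussian hS {z | z ⬝ᵥ z ≤ c} =
      stdGaussianPi N {y | ∑ i, hS.1.eigenvalues i * y i ^ 2 ≤ c} := by
  let U : Matrix (Fin N) (Fin N) ℝ := star hS.1.eigenvectorUnitary
  have hU : U ∈ unitaryGroup (Fin N) ℝ := Unitary.star_mem hS.1.eigenvectorUnitary.2
  calc multivarGaussian hS {z | z ⬝ᵥ z ≤ c}
      = stdGaussianPi N ((U *ᵥ ·) ⁻¹' {y | ∑ i, hS.1.eigenvalues i * y i ^ 2 ≤ c}) := by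
        rw [multivarGaussian, Measure.map_apply (by fun_prop)
          (measurableSet_le (by fun_prop) (by fun_prop))]
        congr 1 with x
        simp only [Set.mem_preimage, Set.mem_ofPred_eq, hS.dotProduct_sqrt_mulVec_self, U]
    _ = stdGaussianPi N {y | ∑ i, hS.1.eigenvalues i * y i ^ 2 ≤ c} := by
        rw [stdGaussianPi, ← Measure.map_apply (by fun_prop)
          (measurableSet_le (by fun_prop) (by fun_prop)), map_mulVec_pi_gaussianReal hU]

/-- lower-tail bound for Gaussian quadratic forms:
`P(ZᵀZ ≤ tr Σ - t) ≤ exp(-t²/(8‖Σ‖_F²))`. -/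
theorem gaussian_quadform_lower_tail {N : ℕ} (S : Matrix (Fin N) (Fin N) ℝ)
    (hS : S.PosSemidef) (t : ℝ) (ht : 0 ≤ t) :
    multivarGaussian hS {z | z ⬝ᵥ z ≤ S.trace - t} ≤
      ENNReal.ofReal (Real.exp (- (t ^ 2 / (8 * ∑ i, ∑ j, (S i j) ^ 2)))) := by
  have htrace : S.trace = ∑ i, hS.1.eigenvalues i := by
    simpa using hS.1.trace_eq_sum_eigenvalues
  rw [multivarGaussian_setOf_dotProduct_self_le, stdGaussianPi, ← ofReal_measureReal, htrace,
    hS.1.sum_sum_sq_eq_sum_eigenvalues_sq]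
  refine ENNReal.ofReal_le_ofReal <|
    (measureReal_sum_mul_sq_le_sum_sub_le_exp hS.eigenvalues_nonneg ht).trans (exp_le_exp.mpr ?_)
  rw [neg_le_neg_iff, show t ^ 2 / (8 * ∑ i, hS.1.eigenvalues i ^ 2) =
    t ^ 2 / (4 * ∑ i, hS.1.eigenvalues i ^ 2) / 2 by ring]
  exact half_le_self (by positivity)
end

section
/- Let A ∈ ℝ^{n×n}, C ∈ ℝ^{m×n}, K ∈ ℝ^{n×m}, and let a(s) = s^d − a_{d−1}s^{d−1} − ⋯ − a₀ be the minimal polynomial of A, of degree d. Let (e_k)_{k≥0} be any sequence of vectors in ℝ^m, define x̂_{k+1} = A x̂_k + K e_k and y_k = C x̂_k + e_k, and fix a past horizon p ≥ 1. Define the stacked past-output vectors Z_k = (y_{k−p}ᵀ, …, y_{k−1}ᵀ)ᵀ ∈ ℝ^{mp} for k ≥ p. Then for every k ≥ p + d there exists δ_k ∈ ℝ^{mp} such that Z_k = a_{d−1} Z_{k−1} + ⋯ + a₀ Z_{k−d} + δ_k and ‖δ_k‖₂ ≤ Δ · sup_{i ≤ k−1} ‖e_i‖₂, where Δ = (d+1)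 ‖a‖₁ · max{ ‖C‖₂‖K‖₂ · max_{0 ≤ t ≤ d−1} ‖A^t‖₂, 1 } · √p. -/
/-!
Write `y (q + i) = C Aⁱ x q + fᵢ`, where the forced response `fᵢ` depends only on
`e q, …, e (q + i)`. Filtering `y q, …, y (q + d)` with the coefficients of the minimal
polynomial `a` kills the free responses, since `C a(A) x q = 0`, and leaves `f_d - ∑ aᵢ fᵢ`.
Each `fᵢ` has norm at most `(i ‖C‖ ‖K‖ maxₜ ‖Aᵗ‖ + 1) sup ‖e‖`, which is at most
`(d + 1) max(‖C‖ ‖K‖ maxₜ ‖Aᵗ‖, 1) sup ‖e‖`; the weights contribute `‖a‖₁`, and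
stacking the `p` blocks of `Z_k` costs `√p`.
-/

open Matrix Finset Polynomial

/-- The spectral (ℓ₂ operator) norm of a real matrix. -/
noncomputable def specNorm {α β : Type*} [Fintype α] [Fintype β] [DecidableEq β]
    (A : Matrix α β ℝ) : ℝ :=
  ‖LinearMap.toContinuousLinearMap (Matrix.toEuclideanLin A)‖

/-- Euclidean norm of a finitely supported real vector. -/
noncomputable def evnorm {α : Type*} [Fintype α] (x : α → ℝ) : ℝ :=
  Real.sqrt (∑ i, (x i) ^ 2)

/-- The stacked vector of the `p` past outputs
`Z_k = (y_{k-p}ᵀ, …, y_{k-1}ᵀ)ᵀ ∈ ℝ^{mp}` (block `i` is `y_{k-p+i}`, `0 ≤ i < p`). -/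
def pastZ {m : ℕ} (p : ℕ) (y : ℕ → Fin m → ℝ) (k : ℕ) : Fin p × Fin m → ℝ :=
  fun ir => y (k - p + ir.1) ir.2

section EuclideanNorm

variable {α : Type*} [Fintype α]

lemma evnorm_eq_norm_toLp (x : α → ℝ) : evnorm x = ‖WithLp.toLp 2 x‖ := by
  simp [evnorm, EuclideanSpace.norm_eq, sq_abs]

lemma evnorm_nonneg (x : α → ℝ) : 0 ≤ evnorm x :=
  Real.sqrt_nonneg _

lemma evnorm_add_le (x z : α → ℝ) : evnorm (x + z) ≤ evnorm x + evnorm z := by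
  simpa only [evnorm_eq_norm_toLp, WithLp.toLp_add] using norm_add_le _ _

lemma evnorm_sub_le (x z : α → ℝ) : evnorm (x - z) ≤ evnorm x + evnorm z := by
  simpa only [evnorm_eq_norm_toLp, WithLp.toLp_sub] using norm_sub_le _ _

lemma evnorm_smul (c : ℝ) (x : α → ℝ) : evnorm (c • x) = |c| * evnorm x := by
  simp only [evnorm_eq_norm_toLp, WithLp.toLp_smul, norm_smul, Real.norm_eq_abs]

lemma evnorm_sum_le {ι : Type*} (s : Finset ι) (f : ι → α → ℝ) :
    evnorm (∑ i ∈ s, f i) ≤ ∑ i ∈ s, evnorm (f i) := by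
  simpa only [evnorm_eq_norm_toLp, WithLp.toLp_sum] using norm_sum_le _ _

lemma evnorm_mulVec_le {β : Type*} [Fintype β] [DecidableEq β] (M : Matrix α β ℝ)
    (v : β → ℝ) : evnorm (M *ᵥ v) ≤ specNorm M * evnorm v := by
  rw [evnorm_eq_norm_toLp, evnorm_eq_norm_toLp]
  exact (LinearMap.toContinuousLinearMap (toEuclideanLin M)).le_opNorm (WithLp.toLp 2 v)

lemma specNorm_nonneg {β : Type*} [Fintype β] [DecidableEq β] (M : Matrix α β ℝ) :
    0 ≤ specNorm M :=
  norm_nonneg _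

lemma evnorm_le_sqrt_card_mul {κ : Type*} [Fintype κ] (f : α × κ → ℝ) {c : ℝ} (hc : 0 ≤ c)
    (h : ∀ i, evnorm (fun r => f (i, r)) ≤ c) :
    evnorm f ≤ Real.sqrt (Fintype.card α) * c := by
  have hblock : ∀ i, ∑ r, f (i, r) ^ 2 ≤ c ^ 2 := fun i => by
    simpa only [evnorm, Real.sqrt_le_left hc] using h i
  calc evnorm f = Real.sqrt (∑ i, ∑ r, f (i, r) ^ 2) := by rw [evnorm, Fintype.sum_prod_type]
    _ ≤ Real.sqrt (Fintype.card α * c ^ 2) := by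
      gcongr
      simpa using Finset.sum_le_sum fun i (_ : i ∈ univ) => hblock i
    _ = Real.sqrt (Fintype.card α) * c := by
      rw [Real.sqrt_mul (Nat.cast_nonneg _), Real.sqrt_sq hc]

lemma evnorm_sub_sum_smul_le (u : α → ℝ) (v : ℕ → α → ℝ) (a : ℕ → ℝ) {d : ℕ} {c : ℝ}
    (hu : evnorm u ≤ c) (hv : ∀ i < d, evnorm (v i) ≤ c) :
    evnorm (u - ∑ i ∈ range d, a i • v i) ≤ (1 + ∑ i ∈ range d, |a i|) * c := by
  have hsum : evnorm (∑ i ∈ range d, a i • v i) ≤ ∑ i ∈ range d, |a i| * c :=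
    (evnorm_sum_le _ _).trans <| sum_le_sum fun i hi => by
      rw [evnorm_smul]
      exact mul_le_mul_of_nonneg_left (hv i (mem_range.mp hi)) (abs_nonneg _)
  calc evnorm (u - ∑ i ∈ range d, a i • v i) ≤ c + ∑ i ∈ range d, |a i| * c :=
        (evnorm_sub_le _ _).trans (add_le_add hu hsum)
    _ = (1 + ∑ i ∈ range d, |a i|) * c := by rw [← sum_mul]; ring

end EuclideanNorm

lemma sum_Icc_one_eq_sum_range_sub {M : Type*} [AddCommMonoid M] (d : ℕ) (g : ℕ → M) :
    ∑ t ∈ Icc 1 d, g t = ∑ i ∈ range d, g (d - i) := by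
  refine sum_nbij' (fun t => d - t) (fun i => d - i) ?_ ?_ ?_ ?_ ?_ <;>
    simp +contextual [Nat.sub_sub_self] <;> omega

lemma pow_eq_sum_smul_pow_of_minpoly_eq {R S : Type*} [CommRing R] [Ring S] [Algebra R S]
    (x : S) {d : ℕ} {a : ℕ → R}
    (hmin : minpoly R x = X ^ d - ∑ i ∈ range d, Polynomial.C (a i) * X ^ i) :
    x ^ d = ∑ i ∈ range d, a i • x ^ i := by
  have h := minpoly.aeval R x
  simpa only [hmin, map_sub, map_pow, aeval_X, map_sum, map_mul, aeval_C, ← Algebra.smul_def,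
    sub_eq_zero] using h

section StateSpace

variable {R ι μ : Type*} [CommRing R] [Fintype ι] [DecidableEq ι] [Fintype μ]
  (A : Matrix ι ι R) (K : Matrix ι μ R) (C : Matrix μ ι R) (e : ℕ → μ → R)
  {x : ℕ → ι → R} {y : ℕ → μ → R}

def forcedOutput (q i : ℕ) : μ → R :=
  C *ᵥ ∑ s ∈ range i, A ^ s *ᵥ K *ᵥ e (q + i - 1 - s) + e (q + i)

lemma state_add_eq (hx : ∀ k, x (k + 1) = A *ᵥ x k + K *ᵥ e k) (q i : ℕ) :
    x (q + i) = A ^ i *ᵥ x q + ∑ s ∈ range i, A ^ s *ᵥ K *ᵥ e (q + i - 1 - s) := by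
  induction i with
  | zero => simp
  | succ i ih =>
    rw [← add_assoc, hx, ih, sum_range_succ', mulVec_add, mulVec_sum, mulVec_mulVec, ← pow_succ',
      add_assoc]
    congr 2
    · refine sum_congr rfl fun s _ => ?_
      rw [pow_succ', ← mulVec_mulVec, show q + i + 1 - 1 - (s + 1) = q + i - 1 - s by omega]
    · simp

lemma output_add_eq (hx : ∀ k, x (k + 1) = A *ᵥ x k + K *ᵥ e k)
    (hy : ∀ k, y k = C *ᵥ x k + e k) (q i : ℕ) :
    y (q + i) = C *ᵥ A ^ i *ᵥ x q + forcedOutput A K C e q i := by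
  rw [hy, state_add_eq A K e hx, mulVec_add, forcedOutput, add_assoc]

lemma output_sub_sum_smul_eq {d : ℕ} {a : ℕ → R} (hA : A ^ d = ∑ i ∈ range d, a i • A ^ i)
    (hx : ∀ k, x (k + 1) = A *ᵥ x k + K *ᵥ e k) (hy : ∀ k, y k = C *ᵥ x k + e k) (q : ℕ) :
    y (q + d) - ∑ i ∈ range d, a i • y (q + i) =
      forcedOutput A K C e q d - ∑ i ∈ range d, a i • forcedOutput A K C e q i := by
  have hfree : C *ᵥ A ^ d *ᵥ x q = ∑ i ∈ range d, a i • C *ᵥ A ^ i *ᵥ x q := by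
    rw [hA, sum_mulVec, mulVec_sum]
    simp only [smul_mulVec, mulVec_smul]
  simp only [output_add_eq A K C e hx hy, hfree, smul_add, sum_add_distrib]
  abel

end StateSpace

section Bounds

variable {ι μ : Type*} [Fintype ι] [DecidableEq ι] [Fintype μ] [DecidableEq μ]
  (A : Matrix ι ι ℝ) (K : Matrix ι μ ℝ) (C : Matrix μ ι ℝ) {e : ℕ → μ → ℝ} {E M : ℝ}

lemma evnorm_forcedOutput_le {q i : ℕ} (hE : ∀ j ≤ q + i, evnorm (e j) ≤ E)
    (hM : ∀ s < i, specNorm (A ^ s) ≤ M) :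
    evnorm (forcedOutput A K C e q i) ≤ (i * (specNorm C * specNorm K * M) + 1) * E := by
  have hE0 : 0 ≤ E := (evnorm_nonneg _).trans (hE 0 (Nat.zero_le _))
  have hterm : ∀ s ∈ range i, evnorm (A ^ s *ᵥ K *ᵥ e (q + i - 1 - s)) ≤ M * (specNorm K * E) :=
    fun s hs => calc
      evnorm (A ^ s *ᵥ K *ᵥ e (q + i - 1 - s))
          ≤ specNorm (A ^ s) * (specNorm K * evnorm (e (q + i - 1 - s))) :=
        (evnorm_mulVec_le _ _).trans
          (mul_le_mul_of_nonneg_left (evnorm_mulVec_le _ _) (specNorm_nonneg _))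
      _ ≤ M * (specNorm K * E) := by
        have hs' := mem_range.mp hs
        exact mul_le_mul (hM s hs')
          (mul_le_mul_of_nonneg_left (hE _ (by omega)) (specNorm_nonneg K))
          (mul_nonneg (specNorm_nonneg _) (evnorm_nonneg _)) ((specNorm_nonneg _).trans (hM s hs'))
  have hstate : evnorm (∑ s ∈ range i, A ^ s *ᵥ K *ᵥ e (q + i - 1 - s)) ≤
      i * (M * (specNorm K * E)) := by
    simpa using (evnorm_sum_le _ _).trans (sum_le_sum hterm)
  calc evnorm (forcedOutput A K C e q i)
      ≤ specNorm C * (i * (M * (specNorm K * E))) + E :=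
        (evnorm_add_le _ _).trans (add_le_add
          ((evnorm_mulVec_le _ _).trans (mul_le_mul_of_nonneg_left hstate (specNorm_nonneg _)))
          (hE _ le_rfl))
    _ = (i * (specNorm C * specNorm K * M) + 1) * E := by ring

lemma evnorm_output_sub_sum_smul_le {d j : ℕ} {a : ℕ → ℝ} {x : ℕ → ι → ℝ} {y : ℕ → μ → ℝ}
    (hmin : minpoly ℝ A = X ^ d - ∑ i ∈ range d, Polynomial.C (a i) * X ^ i)
    (hx : ∀ k, x (k + 1) = A *ᵥ x k + K *ᵥ e k) (hy : ∀ k, y k = C *ᵥ x k + e k)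
    (hdj : d ≤ j) (hE : ∀ i ≤ j, evnorm (e i) ≤ E) (hM : ∀ t < d, specNorm (A ^ t) ≤ M) :
    evnorm (y j - ∑ t ∈ Icc 1 d, a (d - t) • y (j - t)) ≤
      (d + 1) * (1 + ∑ i ∈ range d, |a i|) * max (specNorm C * specNorm K * M) 1 * E := by
  obtain ⟨q, rfl⟩ : ∃ q, j = q + d := ⟨j - d, by omega⟩
  set B := max (specNorm C * specNorm K * M) 1
  have hE0 : 0 ≤ E := (evnorm_nonneg _).trans (hE 0 (Nat.zero_le _))
  have hforced : ∀ i ≤ d, evnorm (forcedOutput A K C e q i) ≤ (d + 1) * B * E := by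
    intro i hi
    refine (evnorm_forcedOutput_le A K C (fun j hj => hE j (by omega))
      (fun s hs => hM s (by omega))).trans (mul_le_mul_of_nonneg_right ?_ hE0)
    have hiB : (i : ℝ) * (specNorm C * specNorm K * M) ≤ i * B :=
      mul_le_mul_of_nonneg_left (le_max_left _ _) (Nat.cast_nonneg _)
    have hid : (i : ℝ) ≤ d := Nat.cast_le.mpr hi
    nlinarith [le_max_right (specNorm C * specNorm K * M) 1]
  have hreflect : ∑ t ∈ Icc 1 d, a (d - t) • y (q + d - t) = ∑ i ∈ range d, a i • y (q + i) := by
    rw [sum_Icc_one_eq_sum_range_sub]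
    exact sum_congr rfl fun i hi => by
      rw [mem_range] at hi
      rw [show d - (d - i) = i by omega, show q + d - (d - i) = q + i by omega]
  rw [hreflect, output_sub_sum_smul_eq A K C e (pow_eq_sum_smul_pow_of_minpoly_eq A hmin) hx hy]
  calc _ ≤ (1 + ∑ i ∈ range d, |a i|) * ((d + 1) * B * E) :=
        evnorm_sub_sum_smul_le _ _ _ (hforced d le_rfl) fun i hi => hforced i hi.le
    _ = _ := by ring

end Bounds

lemma pastZ_sub_sum_smul_pastZ {m p d k : ℕ} (y : ℕ → Fin m → ℝ) (b : ℕ → ℝ) (hk : p + d ≤ k) :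
    pastZ p y k - ∑ t ∈ Icc 1 d, b t • pastZ p y (k - t) =
      pastZ p (fun j => y j - ∑ t ∈ Icc 1 d, b t • y (j - t)) k := by
  ext ⟨i, r⟩
  simp only [pastZ, Pi.sub_apply, Finset.sum_apply, Pi.smul_apply, smul_eq_mul]
  congr 1
  refine sum_congr rfl fun t ht => ?_
  rw [mem_Icc] at ht
  rw [show k - t - p + i = k - p + i - t by omega]

lemma evnorm_pastZ_le {m p k : ℕ} (y : ℕ → Fin m → ℝ) {c : ℝ} (hc : 0 ≤ c)
    (h : ∀ i : Fin p, evnorm (y (k - p + i)) ≤ c) :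
    evnorm (pastZ p y k) ≤ Real.sqrt p * c := by
  simpa using evnorm_le_sqrt_card_mul (pastZ p y k) hc h

/-- ARMA-like representation of the stacked past outputs: for every
`k ≥ p + d` there is `δ_k` with `Z_k = ∑_{t=1}^d a_{d-t} Z_{k-t} + δ_k` and
`‖δ_k‖₂ ≤ Δ sup_{i ≤ k-1} ‖e_i‖₂`,
where `Δ = (d+1) ‖a‖₁ max(‖C‖‖K‖ max_{0 ≤ t ≤ d-1} ‖A^t‖, 1) √p`. -/
theorem pastZ_arma_representation {n m d p : ℕ} (hd : 0 < d)
    (A : Matrix (Fin n) (Fin n) ℝ) (C : Matrix (Fin m) (Fin n) ℝ)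
    (K : Matrix (Fin n) (Fin m) ℝ) (a : ℕ → ℝ)
    (hmin : minpoly ℝ A =
      X ^ d - ∑ i ∈ Finset.range d, Polynomial.C (a i) * X ^ i)
    (e : ℕ → Fin m → ℝ) (xh : ℕ → Fin n → ℝ) (y : ℕ → Fin m → ℝ)
    (hx : ∀ k, xh (k + 1) = A *ᵥ xh k + K *ᵥ e k)
    (hy : ∀ k, y k = C *ᵥ xh k + e k) :
    ∀ k, ∀ hk : p + d ≤ k, ∃ δk : Fin p × Fin m → ℝ,
      pastZ p y k = (∑ t ∈ Finset.Icc 1 d, a (d - t) • pastZ p y (k - t)) + δk ∧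
      evnorm δk ≤
        ((d + 1 : ℝ) * (1 + ∑ i ∈ Finset.range d, |a i|) *
            max (specNorm C * specNorm K *
              (Finset.range d).sup' (Finset.nonempty_range_iff.mpr hd.ne')
                (fun t => specNorm (A ^ t))) 1 * Real.sqrt p) *
          (Finset.range k).sup' (Finset.nonempty_range_iff.mpr (by omega))
            (fun i => evnorm (e i)) := by
  intro k hk
  set M := (range d).sup' (nonempty_range_iff.mpr hd.ne') fun t => specNorm (A ^ t)
  set E := (range k).sup' (nonempty_range_iff.mpr (by omega)) fun i => evnorm (e i)
  have hM : ∀ t < d, specNorm (A ^ t) ≤ M := fun t ht =>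
    le_sup' (fun t => specNorm (A ^ t)) (mem_range.mpr ht)
  have hE : ∀ i < k, evnorm (e i) ≤ E := fun i hi =>
    le_sup' (fun i => evnorm (e i)) (mem_range.mpr hi)
  have hE0 : 0 ≤ E := (evnorm_nonneg _).trans (hE 0 (by omega))
  refine ⟨_, (add_sub_cancel _ _).symm, ?_⟩
  rw [pastZ_sub_sum_smul_pastZ y _ hk]
  calc _ ≤ Real.sqrt p * ((d + 1) * (1 + ∑ i ∈ range d, |a i|) *
        max (specNorm C * specNorm K * M) 1 * E) :=
      evnorm_pastZ_le _ (by positivity) fun i => by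
        have hi := i.isLt
        exact evnorm_output_sub_sum_smul_le A K C hmin hx hy (by omega)
          (fun j hj => hE j (by omega)) hM
    _ = _ := by ring
end
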